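/- arXiv:2203.09352 — 3 statements merged into one kernel-verified Lean document; each statement's English description precedes it below -/
import Mathlib

section
/- If X and Y are subgroups of a discrete p-toral group P with X a proper subgroup of Y, then X is a proper subgroup of its normalizer in Y, i.e., X < N_Y(X). -/
open Subgroup

/-- The Prüfer `p`-group: the `p`-primary component of `ℚ/ℤ`,
written multiplicatively. -/
def Prufer (p : ℕ) [Fact p.Prime] : Type :=
  Multiplicative
    (AddCommGroup.primaryComponent (ℚ ⧸ AddSubgroup.zmultiples (1 : ℚ)) p)

instance (p : ℕ) [Fact p.Prime] : CommGroup (Prufer p) :=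
  inferInstanceAs (CommGroup (Multiplicative _))

/-- `T` is a `p`-torus of rank `k`: a direct product of `k` copies of the
Prüfer `p`-group. -/
def IsPTorusOfRank (p : ℕ) [Fact p.Prime] (k : ℕ) (T : Type*) [Group T] : Prop :=
  Nonempty (T ≃* (Fin k → Prufer p))

/-- `T` is a `p`-torus: a finite direct product of copies of the Prüfer `p`-group. -/
def IsPTorus (p : ℕ) [Fact p.Prime] (T : Type*) [Group T] : Prop :=
  ∃ k : ℕ, IsPTorusOfRank p k T

/-- A group is virtually `p`-toral if it has a `p`-torus of finite index. -/
def IsVirtuallyPToral (p : ℕ) [Fact p.Prime] (G : Type*) [Group G] : Prop :=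
  ∃ T : Subgroup G, IsPTorus p T ∧ T.FiniteIndex

/-- A discrete `p`-toral group is a virtually `p`-toral `p`-group. -/
def IsDiscretePToral (p : ℕ) [Fact p.Prime] (P : Type*) [Group P] : Prop :=
  IsPGroup p P ∧ IsVirtuallyPToral p P

/-!
A `p`-torus is abelian, so its normal core `N` is an abelian normal subgroup of finite index.
For a proper subgroup `H`: if `N ≤ H`, then `H` has finite index, and the normalizer condition
for the finite nilpotent quotient by the normal core of `H` pulls back to `H`. Otherwise pick
`a ∈ N \ H`. Since `N` centralizes `a`, the normal closure `C` of `a` is generated by finitely many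
commuting torsion elements, hence finite, so `H` has finite index in `H ⊔ C` and the first case,
applied inside `H ⊔ C`, gives an element outside `H` normalizing `H`. Applying all this inside `Y`
gives the theorem.
-/

namespace Subgroup

variable {G : Type*} [Group G]

theorem isMulCommutative_of_le {H K : Subgroup G} [IsMulCommutative K] (h : H ≤ K) :
    IsMulCommutative H :=
  .of_setLike_mul_comm fun _ ha _ hb ↦ setLike_mul_comm (h ha) (h hb)

theorem subgroupOf_lt_normalizer_iff {H K : Subgroup G} (h : H ≤ K) :
    H.subgroupOf K < normalizer (H.subgroupOf K) ↔ H < K ⊓ normalizer H := by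
  rw [← subgroupOf_normalizer_eq h, ← map_subtype_lt_map_subtype, subgroupOf_map_subtype,
    subgroupOf_map_subtype, inf_of_le_left h, inf_comm]

theorem subgroupOf_lt_top_of_lt {H K : Subgroup G} (h : H < K) : H.subgroupOf K < ⊤ :=
  lt_top_iff_ne_top.mpr fun htop ↦ h.not_ge (subgroupOf_eq_top.mp htop)

theorem finite_conjugatesOf (N : Subgroup G) [N.FiniteIndex] [IsMulCommutative N] {a : G}
    (ha : a ∈ N) : (conjugatesOf a).Finite := by
  -- `c * a * c⁻¹` depends only on the coset `c N`, since `N` centralizes `a`.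
  refine (Set.finite_range fun q : G ⧸ N ↦ q.out * a * q.out⁻¹).subset ?_
  intro x hx
  obtain ⟨c, rfl⟩ := isConj_iff.mp hx
  obtain ⟨n, hn⟩ := QuotientGroup.mk_out_eq_mul N c
  refine ⟨c, ?_⟩
  dsimp only
  rw [hn, mul_assoc c, setLike_mul_comm n.2 ha]
  group

open scoped IsMulCommutative in
theorem finite_normalClosure_singleton (hG : IsMulTorsion G) (N : Subgroup G) [N.Normal]
    [N.FiniteIndex] [IsMulCommutative N] {a : G} (ha : a ∈ N) :
    Finite (normalClosure ({a} : Set G)) := by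
  have hconj : (Group.conjugatesOfSet ({a} : Set G)).Finite := by
    simpa [Group.conjugatesOfSet] using N.finite_conjugatesOf ha
  have : Finite (Group.conjugatesOfSet ({a} : Set G)) := hconj.to_subtype
  have : Group.FG (normalClosure ({a} : Set G)) := Group.closure_finite_fg _
  have : IsMulCommutative (normalClosure ({a} : Set G)) :=
    isMulCommutative_of_le (normalClosure_le_normal (by simpa using ha))
  exact CommGroup.finite_of_fg_isMulTorsion _ (hG.subgroup _)

theorem relIndex_sup_ne_zero_of_finite {H C : Subgroup G} [Finite C] (hHC : H ≤ normalizer C) :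
    H.relIndex (H ⊔ C) ≠ 0 := by
  let f : C → (H ⊔ C : Subgroup G) ⧸ H.subgroupOf (H ⊔ C) := fun c ↦
    QuotientGroup.mk ⟨c, mem_sup_right c.2⟩
  have hf : Function.Surjective f := by
    intro q
    obtain ⟨⟨k, hk⟩, rfl⟩ := QuotientGroup.mk_surjective q
    rw [← SetLike.mem_coe, sup_comm, coe_mul_of_right_le_normalizer_left C H hHC] at hk
    obtain ⟨c, hc, h, hh, rfl⟩ := hk
    refine ⟨⟨c, hc⟩, QuotientGroup.eq.mpr ?_⟩
    simpa [mem_subgroupOf] using hh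
  have := Finite.of_surjective f hf
  exact index_ne_zero_of_finite

end Subgroup

namespace IsPGroup

open Subgroup

variable {p : ℕ} [Fact p.Prime] {G : Type*} [Group G]

theorem lt_normalizer_of_finiteIndex (hG : IsPGroup p G) {H : Subgroup G} [H.FiniteIndex]
    (hH : H < ⊤) : H < normalizer H := by
  let π := QuotientGroup.mk' H.normalCore
  have hπ : Function.Surjective π := QuotientGroup.mk'_surjective _
  have hker : π.ker ≤ H := by rw [QuotientGroup.ker_mk']; exact normalCore_le H
  have : Group.IsNilpotent (G ⧸ H.normalCore) := (hG.to_quotient _).isNilpotent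
  have hlt : H.map π < ⊤ := by
    rwa [← comap_lt_comap_of_surjective hπ, comap_map_eq_self hker, comap_top]
  rw [← comap_map_eq_self hker, ← comap_normalizer_eq_of_surjective _ hπ,
    comap_lt_comap_of_surjective hπ]
  exact Group.normalizerCondition_of_isNilpotent _ hlt

theorem lt_inf_normalizer_of_relIndex_ne_zero (hG : IsPGroup p G) {H K : Subgroup G}
    (hHK : H < K) (hfin : H.relIndex K ≠ 0) : H < K ⊓ normalizer H := by
  have : (H.subgroupOf K).FiniteIndex := ⟨hfin⟩
  rw [← subgroupOf_lt_normalizer_iff hHK.le]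
  exact (hG.to_subgroup K).lt_normalizer_of_finiteIndex (subgroupOf_lt_top_of_lt hHK)

theorem normalizerCondition (hG : IsPGroup p G) (T : Subgroup G) [T.FiniteIndex]
    [IsMulCommutative T] : NormalizerCondition G := by
  intro H hH
  let N := T.normalCore
  have : IsMulCommutative N := isMulCommutative_of_le (normalCore_le T)
  by_cases hNH : N ≤ H
  · have : H.FiniteIndex := finiteIndex_of_le hNH
    exact hG.lt_normalizer_of_finiteIndex hH
  · obtain ⟨a, haN, haH⟩ := SetLike.not_le_iff_exists.mp hNH
    let C := normalClosure ({a} : Set G)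
    have : Finite C :=
      finite_normalClosure_singleton (hG.isOfFinOrder (Fact.out : p.Prime).ne_zero) N haN
    have hHC : H < H ⊔ C := SetLike.lt_iff_le_and_exists.mpr
      ⟨le_sup_left, a, mem_sup_right (subset_normalClosure rfl), haH⟩
    have hfin : H.relIndex (H ⊔ C) ≠ 0 :=
      relIndex_sup_ne_zero_of_finite le_normalizer_of_normal
    exact (hG.lt_inf_normalizer_of_relIndex_ne_zero hHC hfin).trans_le inf_le_right

end IsPGroup

theorem IsPTorus.isMulCommutative {p : ℕ} [Fact p.Prime] {T : Type*} [Group T]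
    (hT : IsPTorus p T) : IsMulCommutative T := by
  obtain ⟨k, ⟨e⟩⟩ := hT
  exact isMulCommutative_iff.mpr fun a b ↦ e.injective (by rw [map_mul, map_mul, mul_comm])

/-- Normalizer-increasing property: in a discrete `p`-toral group, a proper
subgroup `X < Y` is proper in its normalizer in `Y`. -/
theorem discretePToral_normalizer_increasing (p : ℕ) [Fact p.Prime]
    (P : Type*) [Group P] (hP : IsDiscretePToral p P)
    (X Y : Subgroup P) (hXY : X < Y) :
    X < Y ⊓ normalizer (X : Set P) := by
  obtain ⟨hPp, T, hT, _⟩ := hP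
  have : IsMulCommutative T := hT.isMulCommutative
  rw [← subgroupOf_lt_normalizer_iff hXY.le]
  exact (hPp.to_subgroup Y).normalizerCondition (T.subgroupOf Y) _ (subgroupOf_lt_top_of_lt hXY)
end

section
/- If P is a subgroup of a p-torus Q, then either P = Q or the rank of P (the rank of its maximal divisible subgroup) is strictly less than the rank of Q. -/
open Subgroup

/-!
The `p^j`-torsion of `ℚ/ℤ` is cyclic of order `p^j`, generated by `1/p^j`, so a `p`-torus of
rank `k` has exactly `p^(k j)` elements of order dividing `p^j`. Comparing these counts for
`j = 1` shows that a subtorus `T` of rank at least `n` of a rank-`n` torus `Q` has rank exactly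
`n`; then for every `j` the `p^j`-torsion of `T` fills that of `Q`, and `Q`, being a `p`-group,
is the union of its `p^j`-torsion subsets.
-/

section PowEqOne

variable {G H : Type*}

lemma MulEquiv.card_pow_eq_one [Monoid G] [Monoid H] (e : G ≃* H) (n : ℕ) :
    Nat.card {x : G // x ^ n = 1} = Nat.card {y : H // y ^ n = 1} :=
  Nat.card_congr <| e.toEquiv.subtypeEquiv fun x => by
    rw [MulEquiv.toEquiv_eq_coe, MulEquiv.coe_toEquiv, ← map_pow, MulEquiv.map_eq_one_iff]

lemma Pi.card_pow_eq_one {ι : Type*} [Fintype ι] (H : ι → Type*) [∀ i, Monoid (H i)] (n : ℕ) :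
    Nat.card {v : ∀ i, H i // v ^ n = 1} = ∏ i, Nat.card {y : H i // y ^ n = 1} := by
  rw [← Nat.card_pi]
  exact Nat.card_congr <| (Equiv.subtypeEquivRight fun v => funext_iff).trans
    (Equiv.subtypePiEquivPi (p := fun _ y => y ^ n = 1))

lemma IsPGroup.pi {p : ℕ} {ι : Type*} [Finite ι] {H : ι → Type*} [∀ i, Group (H i)]
    (h : ∀ i, IsPGroup p (H i)) : IsPGroup p (∀ i, H i) := by
  intro v
  choose k hk using fun i => h i (v i)
  obtain ⟨K, hK⟩ := Finite.exists_le k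
  refine ⟨K, funext fun i => ?_⟩
  obtain ⟨c, hc⟩ := pow_dvd_pow p (hK i)
  rw [Pi.pow_apply, hc, pow_mul, hk i, one_pow, Pi.one_apply]

variable [Group G] (T : Subgroup G) (n : ℕ)

def Subgroup.powEqOneInclusion : {x : T // x ^ n = 1} → {x : G // x ^ n = 1} :=
  fun x => ⟨x.1, by simpa using congrArg Subtype.val x.2⟩

lemma Subgroup.powEqOneInclusion_injective : Function.Injective (T.powEqOneInclusion n) :=
  fun _ _ h => Subtype.ext <| Subtype.ext (congrArg Subtype.val h :)

lemma Subgroup.mem_of_card_pow_eq_one_le [Finite {x : G // x ^ n = 1}]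
    (h : Nat.card {x : G // x ^ n = 1} ≤ Nat.card {x : T // x ^ n = 1}) {g : G} (hg : g ^ n = 1) :
    g ∈ T := by
  obtain ⟨⟨⟨g', hg'⟩, _⟩, hx⟩ :=
    ((T.powEqOneInclusion_injective n).bijective_of_nat_card_le h).2 ⟨g, hg⟩
  cases congrArg Subtype.val hx
  exact hg'

end PowEqOne

namespace AddCircle

variable {𝕜 : Type*} [Field 𝕜] (p : 𝕜)

lemma setOf_nsmul_eq_zero [CharZero 𝕜] {n : ℕ} (hn : 0 < n) :
    {u : AddCircle p | n • u = 0} = AddSubgroup.zmultiples ((p / n : 𝕜) : AddCircle p) := by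
  have hn' : (n : 𝕜) ≠ 0 := by exact_mod_cast hn.ne'
  ext u
  obtain ⟨x, rfl⟩ := QuotientAddGroup.mk_surjective u
  simp only [Set.mem_ofPred_eq, SetLike.mem_coe, AddSubgroup.mem_zmultiples_iff]
  constructor
  · intro hx
    obtain ⟨k, hk⟩ := (coe_eq_zero_iff p).mp (by rwa [← coe_nsmul] at hx)
    refine ⟨k, ?_⟩
    rw [← coe_zsmul]
    congr 1
    rw [zsmul_eq_mul, nsmul_eq_mul] at *
    field_simp
    exact hk
  · rintro ⟨k, hk⟩
    rw [← hk, smul_comm, ← coe_nsmul, nsmul_eq_mul, mul_div_cancel₀ _ hn', coe_period, smul_zero]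

lemma card_nsmul_eq_zero [LinearOrder 𝕜] [IsStrictOrderedRing 𝕜] [Fact (0 < p)] {n : ℕ}
    (hn : 0 < n) : Nat.card {u : AddCircle p // n • u = 0} = n := by
  rw [← Set.coe_ofPred, setOf_nsmul_eq_zero p hn, SetLike.coe_sort_coe, Nat.card_zmultiples,
    addOrderOf_period_div hn]

end AddCircle

namespace AddCommGroup

variable {B : Type*} [AddCommGroup B] (p : ℕ)

lemma isPGroup_multiplicative_primaryComponent :
    IsPGroup p (Multiplicative (primaryComponent B p)) := fun x =>
  (Multiplicative.toAdd x).2.imp fun _ hk => Multiplicative.toAdd.injective <| Subtype.ext hk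

lemma card_multiplicative_primaryComponent_pow_eq_one (j : ℕ) :
    Nat.card {x : Multiplicative (primaryComponent B p) // x ^ p ^ j = 1} =
      Nat.card {b : B // p ^ j • b = 0} := by
  refine Nat.card_congr <| (Multiplicative.toAdd.subtypeEquiv fun x => ?_).trans <|
    Equiv.subtypeSubtypeEquivSubtype fun {b} hb => ⟨j, hb⟩
  rw [← toAdd_eq_zero, toAdd_pow, ← ZeroMemClass.coe_eq_zero, AddSubgroup.coe_nsmul]

end AddCommGroup

namespace Prufer

variable (p : ℕ) [Fact p.Prime]

-- `ℚ ⧸ zmultiples 1` is `AddCircle (1 : ℚ)` by definition.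
def mulEquivMultiplicative :
    Prufer p ≃* Multiplicative (AddCommGroup.primaryComponent (AddCircle (1 : ℚ)) p) :=
  MulEquiv.refl _

lemma isPGroup : IsPGroup p (Prufer p) :=
  (AddCommGroup.isPGroup_multiplicative_primaryComponent p).of_equiv
    (mulEquivMultiplicative p).symm

lemma card_pow_eq_one (j : ℕ) : Nat.card {x : Prufer p // x ^ p ^ j = 1} = p ^ j := by
  have : Fact (0 < (1 : ℚ)) := ⟨one_pos⟩
  rw [(mulEquivMultiplicative p).card_pow_eq_one,
    AddCommGroup.card_multiplicative_primaryComponent_pow_eq_one,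
    AddCircle.card_nsmul_eq_zero _ (pow_pos (Fact.out : p.Prime).pos j)]

end Prufer

namespace IsPTorusOfRank

variable {p : ℕ} [Fact p.Prime] {G : Type*} [Group G]

lemma card_pow_eq_one {k : ℕ} (hG : IsPTorusOfRank p k G) (j : ℕ) :
    Nat.card {x : G // x ^ p ^ j = 1} = p ^ (k * j) := by
  obtain ⟨e⟩ := hG
  rw [e.card_pow_eq_one, Pi.card_pow_eq_one]
  simp only [Prufer.card_pow_eq_one, Finset.prod_const, Finset.card_univ, Fintype.card_fin,
    ← pow_mul, mul_comm]

lemma isPGroup {k : ℕ} (hG : IsPTorusOfRank p k G) : IsPGroup p G :=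
  let ⟨e⟩ := hG
  (IsPGroup.pi fun _ => Prufer.isPGroup p).of_equiv e.symm

lemma subgroup_eq_top {n m : ℕ} (hG : IsPTorusOfRank p n G) {T : Subgroup G}
    (hT : IsPTorusOfRank p m T) (hnm : n ≤ m) : T = ⊤ := by
  have hfin (j : ℕ) : Finite {x : G // x ^ p ^ j = 1} :=
    Nat.finite_of_card_ne_zero <| by
      rw [hG.card_pow_eq_one]
      exact pow_ne_zero _ (Fact.out : p.Prime).ne_zero
  have hmn : m ≤ n := by
    have := Nat.card_le_card_of_injective _ (T.powEqOneInclusion_injective (p ^ 1))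
    rwa [hG.card_pow_eq_one, hT.card_pow_eq_one, mul_one, mul_one,
      Nat.pow_le_pow_iff_right (Fact.out : p.Prime).one_lt] at this
  refine eq_top_iff.2 fun g _ => ?_
  obtain ⟨j, hj⟩ := hG.isPGroup g
  refine T.mem_of_card_pow_eq_one_le _ ?_ hj
  rw [hG.card_pow_eq_one, hT.card_pow_eq_one, le_antisymm hmn hnm]

end IsPTorusOfRank

theorem subgroup_of_torus_rank_general (p : ℕ) [Fact p.Prime] (Q : Type*) [Group Q]
    (n : ℕ) (hQ : IsPTorusOfRank p n Q)
    (P : Subgroup Q)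
    (T : Subgroup Q) (hTP : T ≤ P) (m : ℕ) (hT : IsPTorusOfRank p m T) :
    P = ⊤ ∨ m < n := by
  rcases lt_or_ge m n with hmn | hnm
  · exact Or.inr hmn
  · exact Or.inl <| top_le_iff.1 <| (hQ.subgroup_eq_top hT hnm).ge.trans hTP

/-- A subgroup of a `p`-torus is either the whole torus or has strictly
smaller rank (rank of its maximal torus). -/
theorem subgroup_of_torus_rank (p : ℕ) [Fact p.Prime] (Q : Type*) [Group Q]
    (n : ℕ) (hQ : IsPTorusOfRank p n Q)
    (P : Subgroup Q)
    (T : Subgroup Q) (hTP : T ≤ P) (m : ℕ) (hT : IsPTorusOfRank p m T)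
    (hTmax : ∀ R : Subgroup Q, R ≤ P → IsPTorus p R → R ≤ T) :
    P = ⊤ ∨ m < n :=
  subgroup_of_torus_rank_general p Q n hQ P T hTP m hT
end

section
/- Let F be a saturated fusion system over a discrete p-toral group S with maximal torus T, in which Out_F(P) is finite for all P ≤ S. If R ≤ S is a p-torus, R' is an F-conjugate of R, and α: R → R' is an F-isomorphism, then R and R' are contained in T, and α extends to an F-automorphism of T. -/
open Subgroup

/-- A fusion system over a group `S`: for each subgroup `P ≤ S` a set of
homomorphisms `P → S` (the `F`-homomorphisms with source `P`), injective,
containing all conjugation maps, and closed under restriction, composition,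
and inverses of isomorphisms. -/
structure FusionSystem (p : ℕ) [Fact p.Prime] (S : Type*) [Group S] where
  hom : ∀ P : Subgroup S, Set (↥P →* S)
  inj : ∀ P : Subgroup S, ∀ f ∈ hom P, Function.Injective f
  conj_mem : ∀ (P : Subgroup S) (g : S),
    (MulAut.conj g).toMonoidHom.comp P.subtype ∈ hom P
  restrict_mem : ∀ (P Q : Subgroup S) (h : P ≤ Q), ∀ f ∈ hom Q,
    f.comp (Subgroup.inclusion h) ∈ hom P
  comp_mem : ∀ (P Q : Subgroup S) (f : ↥P →* S) (_ : f ∈ hom P)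
    (hrange : ∀ x, f x ∈ Q), ∀ g ∈ hom Q,
    g.comp (f.codRestrict Q hrange) ∈ hom P
  inv_mem : ∀ (P Q : Subgroup S) (e : ↥P ≃* ↥Q),
    Q.subtype.comp e.toMonoidHom ∈ hom P →
      P.subtype.comp e.symm.toMonoidHom ∈ hom Q

namespace FusionSystem

variable {p : ℕ} [Fact p.Prime] {S : Type*} [Group S]

/-- `Q` is an `F`-conjugate of `P`: there is an `F`-isomorphism `P → Q`. -/
def FConj (F : FusionSystem p S) (P Q : Subgroup S) : Prop :=
  ∃ f : ↥P →* S, f ∈ F.hom P ∧ f.range = Q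

/-- `|A| ≤ |B|` in the lexicographic order on the pairs
`(rank of maximal torus, index of the maximal torus)` of discrete `p`-toral
groups. -/
def OrdLE (p : ℕ) [Fact p.Prime] {S : Type*} [Group S] (A B : Subgroup S) : Prop :=
  ∃ (TA TB : Subgroup S) (m n : ℕ),
    TA ≤ A ∧ IsPTorusOfRank p m TA ∧ (∀ R : Subgroup S, R ≤ A → IsPTorus p R → R ≤ TA) ∧
    TB ≤ B ∧ IsPTorusOfRank p n TB ∧ (∀ R : Subgroup S, R ≤ B → IsPTorus p R → R ≤ TB) ∧
    (m < n ∨ (m = n ∧ TA.relIndex A ≤ TB.relIndex B))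

/-- `P` is fully normalized in `F`: `|N_S(P)| ≥ |N_S(Q)|` for all
`F`-conjugates `Q` of `P`. -/
def FullyNormalized (F : FusionSystem p S) (P : Subgroup S) : Prop :=
  ∀ Q : Subgroup S, F.FConj P Q → OrdLE p (Subgroup.normalizer (Q : Set S)) (Subgroup.normalizer (P : Set S))

/-- The group `Aut_F(P)` of `F`-automorphisms of `P`. -/
def autF (F : FusionSystem p S) (P : Subgroup S) : Subgroup (MulAut ↥P) :=
  Subgroup.closure {φ : MulAut ↥P | P.subtype.comp φ.toMonoidHom ∈ F.hom P}

/-- The group `Aut_S(P)` of automorphisms of `P` induced by conjugation by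
elements of `N_S(P)`. -/
def autS (P : Subgroup S) : Subgroup (MulAut ↥P) :=
  Subgroup.closure
    {φ : MulAut ↥P | ∃ g ∈ (Subgroup.normalizer (P : Set S)), ∀ x : ↥P, (φ x : S) = g⁻¹ * x * g}

/-- The group `Inn(P) = Aut_P(P)` of inner automorphisms of `P`. -/
def autInn (P : Subgroup S) : Subgroup (MulAut ↥P) :=
  Subgroup.closure
    {φ : MulAut ↥P | ∃ g ∈ P, ∀ x : ↥P, (φ x : S) = g⁻¹ * x * g}

/-- `P` is fully automized in `F`: `Aut_S(P)` is a Sylow `p`-subgroup of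
`Aut_F(P)`, i.e. has finite index prime to `p` in `Aut_F(P)`. -/
def FullyAutomized (F : FusionSystem p S) (P : Subgroup S) : Prop :=
  (autS P).relIndex (F.autF P) ≠ 0 ∧ ¬ p ∣ (autS P).relIndex (F.autF P)

/-- `Out_F(P)` is finite: `Inn(P)` has finite index in `Aut_F(P)`. -/
def OutFinite (F : FusionSystem p S) (P : Subgroup S) : Prop :=
  (autInn P).relIndex (F.autF P) ≠ 0

/-- `V` is receptive in `F`: every `F`-isomorphism `f : P → V` extends to any
subgroup `P ≤ N ≤ N_S(P)` on which conjugation is intertwined by `f` with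
conjugation by elements of `N_S(V)` (i.e. any `N` inside `N_f`). -/
def Receptive (F : FusionSystem p S) (V : Subgroup S) : Prop :=
  ∀ (P : Subgroup S) (f : ↥P →* S), f ∈ F.hom P → f.range = V →
    ∀ N : Subgroup S, P ≤ N → N ≤ (Subgroup.normalizer (P : Set S)) →
      (∀ g ∈ N, ∃ h ∈ (Subgroup.normalizer (V : Set S)), ∀ (x : S) (hx : x ∈ P) (hx' : g⁻¹ * x * g ∈ P),
        f ⟨g⁻¹ * x * g, hx'⟩ = h⁻¹ * f ⟨x, hx⟩ * h) →
      ∃ fbar : ↥N →* S, fbar ∈ F.hom N ∧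
        ∀ (x : S) (hx : x ∈ P) (hx' : x ∈ N), fbar ⟨x, hx'⟩ = f ⟨x, hx⟩

/-- `F` is saturated: every subgroup has a fully automized, receptive, fully
normalized `F`-conjugate. -/
def Saturated (F : FusionSystem p S) : Prop :=
  ∀ P : Subgroup S, ∃ Q : Subgroup S,
    F.FConj P Q ∧ F.FullyNormalized Q ∧ F.FullyAutomized Q ∧ F.Receptive Q

end FusionSystem

/-!
Since `T` is abelian and contains every `p`-torus, it centralizes `R` and `R'`, so receptivity of
a receptive `F`-conjugate `V` of `R` extends both `ε : R → V` and `ε ∘ f⁻¹ : R' → V` to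
`F`-morphisms `T → S`. Their images are `p`-tori, hence lie in `T`, and equal `T` because a
`p`-torus is co-Hopfian: its `n`-torsion is finite for every `n ≠ 0`, so an injective endomorphism
permutes each `n`-torsion set. The extension of `f` is the first extension followed by the
inverse of the second.
-/

open Function

theorem MonoidHom.surjective_of_injective_of_finite_torsion {G : Type*} [Group G]
    (htors : IsMulTorsion G) (hfin : ∀ n, 0 < n → {x : G | x ^ n = 1}.Finite)
    {φ : G →* G} (hφ : Injective φ) : Surjective φ := by
  intro y
  set n := orderOf y
  have hmaps : Set.MapsTo φ {x | x ^ n = 1} {x | x ^ n = 1} := fun x (hx : x ^ n = 1) => by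
    simp [← map_pow, hx]
  obtain ⟨x, -, hx⟩ := (((hfin n (htors y).orderOf_pos).injOn_iff_bijOn_of_mapsTo hmaps).mp
    hφ.injOn).surjOn (pow_orderOf_eq_one y)
  exact ⟨x, hx⟩

namespace Prufer

variable {p : ℕ} [Fact p.Prime]

theorem isOfFinOrder (x : Prufer p) : IsOfFinOrder x := by
  obtain ⟨k, hk⟩ := (Multiplicative.toAdd x).2
  exact isOfFinOrder_iff_pow_eq_one.mpr
    ⟨p ^ k, pow_pos (Fact.out : p.Prime).pos k, congrArg Multiplicative.ofAdd (Subtype.ext hk)⟩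

/-- `ℚ ⧸ ℤ` is `AddCircle (1 : ℚ)`, whose `n`-torsion is finite. -/
theorem finite_setOf_pow_eq_one {n : ℕ} (hn : 0 < n) : {x : Prufer p | x ^ n = 1}.Finite := by
  let ι : Prufer p → AddCircle (1 : ℚ) := fun x => (Multiplicative.toAdd x).1
  have hι : Injective ι := Subtype.val_injective.comp Multiplicative.toAdd.injective
  refine ((AddCircle.finite_torsion (1 : ℚ) hn).preimage hι.injOn).subset fun x hx => ?_
  exact congrArg (fun y : Prufer p => (Multiplicative.toAdd y).1) hx

end Prufer

section PTorus

variable {p : ℕ} [Fact p.Prime]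

theorem IsPTorus.of_mulEquiv {G H : Type*} [Group G] [Group H] (hG : IsPTorus p G)
    (e : G ≃* H) : IsPTorus p H :=
  let ⟨k, ⟨e'⟩⟩ := hG
  ⟨k, ⟨e.symm.trans e'⟩⟩

theorem IsPTorus.isMulCommutative_s18 {G : Type*} [Group G] (hG : IsPTorus p G) :
    IsMulCommutative G := by
  obtain ⟨k, ⟨e⟩⟩ := hG
  exact IsMulCommutative.of_comm fun a b => e.injective (by simp [mul_comm])

theorem IsPTorus.surjective_of_injective {G : Type*} [Group G] (hG : IsPTorus p G)
    {φ : G →* G} (hφ : Injective φ) : Surjective φ := by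
  obtain ⟨k, ⟨e⟩⟩ := hG
  refine MonoidHom.surjective_of_injective_of_finite_torsion (fun x => ?_) (fun n hn => ?_) hφ
  · exact (e.injective.isOfFinOrder_iff (f := e.toMonoidHom)).mp
      (IsOfFinOrder.pi fun i => Prufer.isOfFinOrder _)
  · refine ((Set.Finite.pi fun _ => Prufer.finite_setOf_pow_eq_one hn).preimage
      e.injective.injOn).subset fun x (hx : x ^ n = 1) => ?_
    exact fun i _ => congrFun (show e x ^ n = 1 by rw [← map_pow, hx, map_one]) i

variable {S : Type*} [Group S] {T : Subgroup S}

theorem IsPTorus.le_centralizer_of_le (hT : IsPTorus p T) {P : Subgroup S} (hPT : P ≤ T) :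
    T ≤ Subgroup.centralizer (P : Set S) :=
  (Subgroup.le_centralizer_iff_isMulCommutative.mpr hT.isMulCommutative_s18).trans
    (Subgroup.centralizer_le hPT)

theorem IsPTorus.range_eq_of_injective (hT : IsPTorus p T)
    (hTmax : ∀ R : Subgroup S, IsPTorus p R → R ≤ T) {g : T →* S} (hg : Injective g) :
    g.range = T := by
  have hgT : ∀ x, g x ∈ T := fun x => hTmax _ (hT.of_mulEquiv (g.ofInjective hg)) ⟨x, rfl⟩
  refine le_antisymm (hTmax _ (hT.of_mulEquiv (g.ofInjective hg))) fun y hy => ?_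
  obtain ⟨x, hx⟩ := hT.surjective_of_injective (φ := g.codRestrict T hgT)
    (fun a b h => hg (congrArg Subtype.val h)) ⟨y, hy⟩
  exact ⟨x, congrArg Subtype.val hx⟩

end PTorus

namespace FusionSystem

variable {p : ℕ} [Fact p.Prime] {S : Type*} [Group S] (F : FusionSystem p S)
  {P Q Q' : Subgroup S}

def IsFIso (e : P ≃* Q) : Prop :=
  Q.subtype.comp e.toMonoidHom ∈ F.hom P

variable {F}

theorem IsFIso.symm {e : P ≃* Q} (he : F.IsFIso e) : F.IsFIso e.symm :=
  F.inv_mem P Q e he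

theorem IsFIso.trans {e : P ≃* Q} {e' : Q ≃* Q'} (he : F.IsFIso e) (he' : F.IsFIso e') :
    F.IsFIso (e.trans e') :=
  F.comp_mem P Q _ he (fun x => (e x).2) _ he'

theorem exists_isFIso_of_mem_hom {f : P →* S} (hf : f ∈ F.hom P) (hQ : f.range = Q) :
    ∃ e : P ≃* Q, F.IsFIso e ∧ ∀ x, (e x : S) = f x :=
  ⟨(f.ofInjective (F.inj P f hf)).trans (MulEquiv.subgroupCongr hQ), hf, fun _ => rfl⟩

/-- Conjugation by an element centralizing `P` is trivial on both sides, so `N ≤ N_e`. -/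
theorem Receptive.exists_extension_of_le_centralizer {V N : Subgroup S} (hV : F.Receptive V)
    {e : P ≃* V} (he : F.IsFIso e) (hPN : P ≤ N)
    (hNP : N ≤ Subgroup.centralizer (P : Set S)) :
    ∃ ē : N →* S, ē ∈ F.hom N ∧
      ∀ (x : S) (hx : x ∈ P) (hx' : x ∈ N), ē ⟨x, hx'⟩ = e ⟨x, hx⟩ := by
  have hrange : (V.subtype.comp e.toMonoidHom).range = V := by
    rw [MonoidHom.range_comp, MonoidHom.range_eq_top.mpr e.surjective, ← MonoidHom.range_eq_map,
      Subgroup.range_subtype]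
  refine hV P _ he hrange N hPN (hNP.trans (Subgroup.centralizer_le_normalizer _))
    fun g hg => ⟨1, one_mem _, fun x hx hx' => ?_⟩
  have hgx : g⁻¹ * x * g = x := by
    rw [mul_assoc, Subgroup.mem_centralizer_iff.mp (hNP hg) x hx, inv_mul_cancel_left]
  simp only [hgx, inv_one, one_mul, mul_one]

end FusionSystem

theorem torus_iso_extends_to_maximal_torus_general (p : ℕ) [Fact p.Prime]
    (S : Type*) [Group S]
    (T : Subgroup S) (hT : IsPTorus p T)
    (hTmax : ∀ R : Subgroup S, IsPTorus p R → R ≤ T)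
    (F : FusionSystem p S) (hsat : F.Saturated)
    (R : Subgroup S) (hR : IsPTorus p R)
    (R' : Subgroup S)
    (f : ↥R →* S) (hf : f ∈ F.hom R) (hfR' : f.range = R') :
    R ≤ T ∧ R' ≤ T ∧
      ∃ φ : ↥T ≃* ↥T, T.subtype.comp φ.toMonoidHom ∈ F.hom T ∧
        ∀ (x : S) (hx : x ∈ R) (hx' : x ∈ T), (φ ⟨x, hx'⟩ : S) = f ⟨x, hx⟩ := by
  obtain ⟨α, hα, hαf⟩ := F.exists_isFIso_of_mem_hom hf hfR'
  have hRT : R ≤ T := hTmax R hR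
  have hR'T : R' ≤ T := hTmax R' (hR.of_mulEquiv α)
  obtain ⟨V, ⟨g, hg, hgV⟩, -, -, hV⟩ := hsat R
  obtain ⟨ε, hε, -⟩ := F.exists_isFIso_of_mem_hom hg hgV
  obtain ⟨ε₁, hε₁, hε₁ε⟩ := hV.exists_extension_of_le_centralizer hε hRT
    (hT.le_centralizer_of_le hRT)
  obtain ⟨ε₂, hε₂, hε₂ε⟩ := hV.exists_extension_of_le_centralizer (hα.symm.trans hε) hR'T
    (hT.le_centralizer_of_le hR'T)
  obtain ⟨β₁, hβ₁, hβ₁ε⟩ := F.exists_isFIso_of_mem_hom hε₁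
    (hT.range_eq_of_injective hTmax (F.inj T ε₁ hε₁))
  obtain ⟨β₂, hβ₂, hβ₂ε⟩ := F.exists_isFIso_of_mem_hom hε₂
    (hT.range_eq_of_injective hTmax (F.inj T ε₂ hε₂))
  refine ⟨hRT, hR'T, β₁.trans β₂.symm, hβ₁.trans hβ₂.symm, fun x hx hxT => ?_⟩
  set y := α ⟨x, hx⟩
  have hβ : β₂ ⟨y, hR'T y.2⟩ = β₁ ⟨x, hxT⟩ := by
    ext
    rw [hβ₂ε, hβ₁ε, hε₂ε _ y.2, hε₁ε _ hx]
    simp [y]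
  rw [MulEquiv.trans_apply, ← hβ, MulEquiv.symm_apply_apply]
  exact hαf _

/-- In a saturated fusion system over a discrete `p`-toral group `S` with
maximal torus `T`, in which `Out_F(P)` is finite for all `P ≤ S`: every
`F`-isomorphism `f : R → R'` between `p`-tori of `S` has `R, R' ≤ T` and
extends to an `F`-automorphism of `T`. -/
theorem torus_iso_extends_to_maximal_torus (p : ℕ) [Fact p.Prime]
    (S : Type*) [Group S] (hS : IsDiscretePToral p S)
    (T : Subgroup S) (hT : IsPTorus p T) (hTfi : T.FiniteIndex)
    (hTmax : ∀ R : Subgroup S, IsPTorus p R → R ≤ T)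
    (F : FusionSystem p S) (hsat : F.Saturated)
    (hout : ∀ P : Subgroup S, F.OutFinite P)
    (R : Subgroup S) (hR : IsPTorus p R)
    (R' : Subgroup S)
    (f : ↥R →* S) (hf : f ∈ F.hom R) (hfR' : f.range = R') :
    R ≤ T ∧ R' ≤ T ∧
      ∃ φ : ↥T ≃* ↥T, T.subtype.comp φ.toMonoidHom ∈ F.hom T ∧
        ∀ (x : S) (hx : x ∈ R) (hx' : x ∈ T), (φ ⟨x, hx'⟩ : S) = f ⟨x, hx⟩ :=
  torus_iso_extends_to_maximal_torus_general p S T hT hTmax F hsat R hR R' f hf hfR'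
end
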